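/- Let s ∈ Ṡ, t ∈ S̄ and k ≥ 0. If r¹, r² ∈ S̄ satisfy σ^k(r¹) = σ^k(r²) = t and itin_s(r¹) = itin_s(r²), then r¹ = r². In particular, no two distinct intermediate external addresses have the same itinerary with respect to s. -/
import Mathlib


noncomputable section

/-- Entries of an address: a real number or `∞`. -/
abbrev Entry : Type := WithTop ℝ

/-- An address is a sequence of entries. -/
abbrev Addr : Type := ℕ → Entry

/-- The address `∞` (all of whose entries are infinite). -/
def topAddr : Addr := fun _ => ⊤

/-- The shift map `σ`, deleting the first entry. -/
def shift (a : Addr) : Addr := fun k => a (k + 1)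

/-- The iterated shift `σ^k`. -/
def shiftIter (a : Addr) (k : ℕ) : Addr := fun j => a (j + k)

/-- `σ^k(a)` is defined (all earlier iterates differ from `∞`). -/
def shiftDef (a : Addr) (k : ℕ) : Prop := ∀ j, j < k → shiftIter a j ≠ topAddr

/-- Prepending an entry to an address. -/
def consAddr (x : Entry) (a : Addr) : Addr := fun k => if k = 0 then x else a (k - 1)

/-- The lexicographic (strict) order on addresses. -/
def addrLt (a b : Addr) : Prop := ∃ k, (∀ j, j < k → a j = b j) ∧ a k < b k

/-- The lexicographic order on addresses. -/
def addrLe (a b : Addr) : Prop := addrLt a b ∨ a = b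

/-- Infinite external addresses: all entries are integers. -/
def IsExtAddr (a : Addr) : Prop := ∀ k, ∃ m : ℤ, a k = ((m : ℝ) : Entry)

/-- Intermediate external addresses of length `n ≥ 1`: the first `n - 2` entries are
integers, the `(n-1)`-st entry lies in `ℤ + 1/2`, and all further entries are `∞`
(for `n = 1` this is the address `∞` itself). -/
def IsIntermediate (a : Addr) (n : ℕ) : Prop :=
  1 ≤ n ∧ (∀ k, k + 2 < n → ∃ m : ℤ, a k = ((m : ℝ) : Entry)) ∧
    (∀ k, k + 2 = n → ∃ m : ℤ, a k = (((m : ℝ) + 1 / 2 : ℝ) : Entry)) ∧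
    (∀ k, n ≤ k + 1 → a k = ⊤)

/-- Membership in `Ṡ`: infinite external addresses and intermediate ones of length `≥ 2`. -/
def InSDot (a : Addr) : Prop := IsExtAddr a ∨ ∃ n, 2 ≤ n ∧ IsIntermediate a n

/-- Membership in `S̄ = Ṡ ∪ {∞}`. -/
def InSBar (a : Addr) : Prop := InSDot a ∨ a = topAddr

/-- `a` is periodic of (exact) period `n`. -/
def PeriodicAddr (a : Addr) (n : ℕ) : Prop :=
  1 ≤ n ∧ shiftIter a n = a ∧ ∀ m, 1 ≤ m → m < n → shiftIter a m ≠ a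

/-- Itinerary entries: integers `j`, boundary symbols `[j/(j-1)]` (encoded `bdy j`),
or the symbol `*`. -/
inductive ItinEntry : Type
  | int : ℤ → ItinEntry
  | bdy : ℤ → ItinEntry
  | star : ItinEntry
  deriving DecidableEq

open scoped Classical in
/-- The itinerary `itin_s(r)`; position `k` holds the entry `u_{k+1}` of the paper:
`u_{k+1} = j` if `js < σ^k(r) < (j+1)s`, the boundary symbol `[j/(j-1)]` if `σ^k(r) = js`,
and `*` if `σ^k(r) = ∞`. -/
def itin (s r : Addr) : ℕ → ItinEntry := fun k =>
  if shiftIter r k = topAddr then ItinEntry.star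
  else if h : ∃ j : ℤ, shiftIter r k = consAddr ((j : ℝ) : Entry) s then ItinEntry.bdy h.choose
  else if h : ∃ j : ℤ, addrLt (consAddr ((j : ℝ) : Entry) s) (shiftIter r k) ∧
      addrLt (shiftIter r k) (consAddr (((j + 1 : ℤ) : ℝ) : Entry) s) then ItinEntry.int h.choose
  else ItinEntry.star

/-- Replace each boundary symbol `[j/(j-1)]` by `j`. -/
def entryPlus : ItinEntry → ItinEntry
  | ItinEntry.bdy j => ItinEntry.int j
  | e => e

/-- Replace each boundary symbol `[j/(j-1)]` by `j - 1`. -/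
def entryMinus : ItinEntry → ItinEntry
  | ItinEntry.bdy j => ItinEntry.int (j - 1)
  | e => e

/-- The itinerary `itin⁺_s(r)`. -/
def itinPlus (s r : Addr) : ℕ → ItinEntry := fun k => entryPlus (itin s r k)

/-- The itinerary `itin⁻_s(r)`. -/
def itinMinus (s r : Addr) : ℕ → ItinEntry := fun k => entryMinus (itin s r k)

/-- The periodic itinerary `(u_1 … u_n)^∞` (with `u_i` encoded as `u (i - 1)`). -/
def perItin (u : ℕ → ℤ) (n : ℕ) : ℕ → ItinEntry := fun k => ItinEntry.int (u (k % n))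

/-- The finite itinerary word `u_1 … u_{n-1} *` (star from position `n - 1` onwards). -/
def finWord (u : ℕ → ℤ) (n : ℕ) : ℕ → ItinEntry := fun k =>
  if k + 1 < n then ItinEntry.int (u k) else ItinEntry.star

/-- A combinatorial characteristic ray pair of period `n` with itinerary `(u_1 … u_n)^∞`. -/
def CharRayPair (rm rp : Addr) (n : ℕ) (u : ℕ → ℤ) : Prop :=
  IsExtAddr rm ∧ IsExtAddr rp ∧ PeriodicAddr rm n ∧ PeriodicAddr rp n ∧ addrLt rm rp ∧
    (∀ k, 1 ≤ k → ¬(addrLt rm (shiftIter rm k) ∧ addrLt (shiftIter rm k) rp)) ∧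
    (∀ k, 1 ≤ k → ¬(addrLt rm (shiftIter rp k) ∧ addrLt (shiftIter rp k) rp)) ∧
    itinMinus rm rm = perItin u n ∧ itinMinus rm rp = perItin u n ∧
    addrLt (shiftIter rp (n - 1)) (shiftIter rm (n - 1))
section Helpers

lemma shiftIter_zero (a : Addr) : shiftIter a 0 = a := rfl

lemma shiftIter_app (a : Addr) (p j : ℕ) : shiftIter a p j = a (j + p) := rfl

lemma shiftIter_app_zero (a : Addr) (p : ℕ) : shiftIter a p 0 = a p := by
  show a (0 + p) = a p
  rw [Nat.zero_add]

lemma shiftIter_comp (a : Addr) (j : ℕ) : shiftIter (shiftIter a 1) j = shiftIter a (j + 1) := by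
  funext i
  show a (i + j + 1) = a (i + (j + 1))
  rfl

lemma consAddr_zero (x : Entry) (a : Addr) : consAddr x a 0 = x := rfl

lemma consAddr_succ (x : Entry) (a : Addr) (k : ℕ) : consAddr x a (k + 1) = a k := by
  simp [consAddr]

lemma shift_cons (x : Entry) (a : Addr) : shiftIter (consAddr x a) 1 = a := by
  funext k
  show consAddr x a (k + 1) = a k
  exact consAddr_succ x a k

lemma eq_cons (r : Addr) : r = consAddr (r 0) (shiftIter r 1) := by
  funext k
  cases k with
  | zero => rfl
  | succ i => rw [consAddr_succ]; rfl

lemma topAddr_app (k : ℕ) : topAddr k = ⊤ := rfl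

lemma ne_topAddr_of_head (r : Addr) (c : ℝ) (h : r 0 = ((c : ℝ) : Entry)) : r ≠ topAddr := by
  intro ht
  rw [ht] at h
  exact WithTop.top_ne_coe h

lemma int_ne_half (m m' : ℤ) : ((m : ℝ) : Entry) ≠ (((m' : ℝ) + 1 / 2 : ℝ) : Entry) := by
  intro h
  have h1 : (m : ℝ) = (m' : ℝ) + 1 / 2 := WithTop.coe_inj.mp h
  have h2 : ((2 * m : ℤ) : ℝ) = ((2 * m' + 1 : ℤ) : ℝ) := by push_cast; linarith
  have h3 : (2 * m : ℤ) = 2 * m' + 1 := by exact_mod_cast h2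
  omega

lemma addrLt_irrefl (a : Addr) : ¬ addrLt a a := by
  rintro ⟨k, -, hk⟩
  exact lt_irrefl _ hk

lemma addrLt_asymm {a b : Addr} (h1 : addrLt a b) (h2 : addrLt b a) : False := by
  obtain ⟨k1, hag1, hlt1⟩ := h1
  obtain ⟨k2, hag2, hlt2⟩ := h2
  rcases Nat.lt_trichotomy k1 k2 with h | h | h
  · rw [hag2 k1 h] at hlt1; exact lt_irrefl _ hlt1
  · subst h; exact lt_irrefl _ (hlt1.trans hlt2)
  · rw [hag1 k2 h] at hlt2; exact lt_irrefl _ hlt2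

open Classical in
lemma addrLt_trichotomy (a b : Addr) : addrLt a b ∨ a = b ∨ addrLt b a := by
  by_cases h : a = b
  · exact Or.inr (Or.inl h)
  have hex : ∃ k, a k ≠ b k := by
    by_contra h'
    push_neg at h'
    exact h (funext h')
  have hk := Nat.find_spec hex
  have hmin : ∀ j, j < Nat.find hex → a j = b j := fun j hj =>
    not_not.mp (Nat.find_min hex hj)
  rcases lt_trichotomy (a (Nat.find hex)) (b (Nat.find hex)) with h' | h' | h'
  · exact Or.inl ⟨Nat.find hex, hmin, h'⟩
  · exact absurd h' hk
  · exact Or.inr (Or.inr ⟨Nat.find hex, fun j hj => (hmin j hj).symm, h'⟩)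

lemma lt_of_head {u v : Addr} (h : u 0 < v 0) : addrLt u v :=
  ⟨0, fun j hj => absurd hj (Nat.not_lt_zero j), h⟩

lemma lt_of_tail {u v : Addr} (h0 : u 0 = v 0) (h : addrLt (shiftIter u 1) (shiftIter v 1)) :
    addrLt u v := by
  obtain ⟨k, hag, hlt⟩ := h
  refine ⟨k + 1, ?_, hlt⟩
  intro j hj
  cases j with
  | zero => exact h0
  | succ i => exact hag i (by omega)

lemma lt_cases {u v : Addr} (h : addrLt u v) :
    u 0 < v 0 ∨ (u 0 = v 0 ∧ addrLt (shiftIter u 1) (shiftIter v 1)) := by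
  obtain ⟨k, hag, hlt⟩ := h
  cases k with
  | zero => exact Or.inl hlt
  | succ i =>
    refine Or.inr ⟨hag 0 (Nat.succ_pos i), ⟨i, ?_, hlt⟩⟩
    intro j hj
    exact hag (j + 1) (by omega)

lemma sandwich_aux (s x : Addr) (j j' : ℤ) (hjj : j < j')
    (h2 : addrLt x (consAddr (((j + 1 : ℤ) : ℝ) : Entry) s))
    (h1' : addrLt (consAddr ((j' : ℝ) : Entry) s) x) : False := by
  have hx0 : (((j' : ℝ)) : Entry) ≤ x 0 := by
    rcases lt_cases h1' with hh | ⟨hh, -⟩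
    · exact le_of_lt hh
    · exact le_of_eq hh
  rcases lt_cases h2 with hh | ⟨hh, ht⟩
  · have h3 : (((j' : ℝ)) : Entry) < (((j + 1 : ℤ) : ℝ) : Entry) := lt_of_le_of_lt hx0 hh
    have h4 : (j' : ℝ) < ((j + 1 : ℤ) : ℝ) := WithTop.coe_lt_coe.mp h3
    have h5 : j' < j + 1 := by exact_mod_cast h4
    omega
  · -- x 0 = j + 1, tail of x is < s
    rw [shift_cons] at ht
    rcases lt_cases h1' with hh' | ⟨hh', ht'⟩
    · rw [hh] at hh'
      have h4 : (j' : ℝ) < ((j + 1 : ℤ) : ℝ) := WithTop.coe_lt_coe.mp hh'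
      have h5 : j' < j + 1 := by exact_mod_cast h4
      omega
    · rw [shift_cons] at ht'
      exact addrLt_asymm ht ht'

lemma sandwich_unique (s x : Addr) (j j' : ℤ)
    (h1 : addrLt (consAddr ((j : ℝ) : Entry) s) x)
    (h2 : addrLt x (consAddr (((j + 1 : ℤ) : ℝ) : Entry) s))
    (h1' : addrLt (consAddr ((j' : ℝ) : Entry) s) x)
    (h2' : addrLt x (consAddr (((j' + 1 : ℤ) : ℝ) : Entry) s)) : j = j' := by
  rcases lt_trichotomy j j' with h | h | h
  · exact absurd (sandwich_aux s x j j' h h2 h1') id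
  · exact h
  · exact absurd (sandwich_aux s x j' j h h2' h1) id

lemma itin_star (s r : Addr) (k : ℕ) (h : shiftIter r k = topAddr) :
    itin s r k = ItinEntry.star := by
  unfold itin
  rw [if_pos h]

lemma itin_bdy (s r : Addr) (k : ℕ) (j : ℤ) (hx : shiftIter r k ≠ topAddr)
    (h : shiftIter r k = consAddr ((j : ℝ) : Entry) s) :
    itin s r k = ItinEntry.bdy j := by
  have hex : ∃ j' : ℤ, shiftIter r k = consAddr ((j' : ℝ) : Entry) s := ⟨j, h⟩
  unfold itin
  rw [if_neg hx, dif_pos hex]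
  congr 1
  have hspec := hex.choose_spec
  have heq : consAddr ((hex.choose : ℝ) : Entry) s = consAddr ((j : ℝ) : Entry) s :=
    hspec.symm.trans h
  have h0 := congrFun heq 0
  rw [consAddr_zero, consAddr_zero] at h0
  have h1 : ((hex.choose : ℤ) : ℝ) = ((j : ℤ) : ℝ) := WithTop.coe_inj.mp h0
  exact_mod_cast h1

lemma itin_int (s r : Addr) (k : ℕ) (j : ℤ) (hx : shiftIter r k ≠ topAddr)
    (hnb : ¬∃ j' : ℤ, shiftIter r k = consAddr ((j' : ℝ) : Entry) s)
    (hl : addrLt (consAddr ((j : ℝ) : Entry) s) (shiftIter r k))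
    (hr : addrLt (shiftIter r k) (consAddr (((j + 1 : ℤ) : ℝ) : Entry) s)) :
    itin s r k = ItinEntry.int j := by
  have hex : ∃ j0 : ℤ, addrLt (consAddr ((j0 : ℝ) : Entry) s) (shiftIter r k) ∧
      addrLt (shiftIter r k) (consAddr (((j0 + 1 : ℤ) : ℝ) : Entry) s) := ⟨j, hl, hr⟩
  unfold itin
  rw [if_neg hx, dif_neg hnb, dif_pos hex]
  congr 1
  exact sandwich_unique s _ hex.choose j hex.choose_spec.1 hex.choose_spec.2 hl hr

lemma itin_shift (s r : Addr) (j : ℕ) : itin s (shiftIter r 1) j = itin s r (j + 1) := by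
  unfold itin
  rw [shiftIter_comp]

/-- Structure: head entry of an address in `Ṡ` is an integer or a half-integer. -/
lemma sdot_head_grid (r : Addr) (h : InSDot r) :
    (∃ m : ℤ, r 0 = ((m : ℝ) : Entry)) ∨ (∃ m : ℤ, r 0 = (((m : ℝ) + 1 / 2 : ℝ) : Entry)) := by
  rcases h with h | ⟨n, hn, h1, hint, hhalf, htop⟩
  · exact Or.inl (h 0)
  · rcases Nat.lt_trichotomy (0 + 2) n with hc | hc | hc
    · exact Or.inl (hint 0 hc)
    · exact Or.inr (hhalf 0 hc)
    · omega

lemma half_shift_top (r : Addr) (h : InSDot r) (m : ℤ)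
    (h0 : r 0 = (((m : ℝ) + 1 / 2 : ℝ) : Entry)) : shiftIter r 1 = topAddr := by
  rcases h with h | ⟨n, hn, h1, hint, hhalf, htop⟩
  · obtain ⟨m', hm'⟩ := h 0
    rw [h0] at hm'
    exact absurd hm'.symm (int_ne_half m' m)
  · have hn2 : n = 2 := by
      rcases Nat.lt_trichotomy (0 + 2) n with hc | hc | hc
      · obtain ⟨m', hm'⟩ := hint 0 hc
        rw [h0] at hm'
        exact absurd hm'.symm (int_ne_half m' m)
      · omega
      · omega
    funext j
    show r (j + 1) = ⊤
    exact htop (j + 1) (by omega)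

lemma int_shift_ne_top (r : Addr) (h : InSDot r) (m : ℤ)
    (h0 : r 0 = ((m : ℝ) : Entry)) : shiftIter r 1 ≠ topAddr := by
  intro ht
  have h1 : r 1 = ⊤ := by
    have := congrFun ht 0
    rwa [shiftIter_app_zero] at this
  rcases h with h | ⟨n, hn, hh1, hint, hhalf, htop⟩
  · obtain ⟨m', hm'⟩ := h 1
    rw [h1] at hm'
    exact WithTop.top_ne_coe hm'
  · have hn2 : n = 2 := by
      rcases Nat.lt_trichotomy (1 + 2) n with hc | hc | hc
      · obtain ⟨m', hm'⟩ := hint 1 hc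
        rw [h1] at hm'
        exact absurd hm' WithTop.top_ne_coe
      · obtain ⟨m', hm'⟩ := hhalf 1 hc
        rw [h1] at hm'
        exact absurd hm' WithTop.top_ne_coe
      · omega
    obtain ⟨m', hm'⟩ := hhalf 0 (by omega)
    rw [h0] at hm'
    exact int_ne_half m m' hm'

/-- The key step: two addresses in `Ṡ` with the same tail and the same itinerary entry
have the same head. -/
lemma head_eq (s r1 r2 : Addr) (h1 : InSDot r1) (h2 : InSDot r2)
    (hw : shiftIter r1 1 = shiftIter r2 1) (hit : itin s r1 0 = itin s r2 0) :
    r1 0 = r2 0 := by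
  have hx1 : shiftIter r1 0 ≠ topAddr := by
    rw [shiftIter_zero]
    rcases sdot_head_grid r1 h1 with ⟨m, hm⟩ | ⟨m, hm⟩
    · exact ne_topAddr_of_head r1 m hm
    · exact ne_topAddr_of_head r1 _ hm
  have hx2 : shiftIter r2 0 ≠ topAddr := by
    rw [shiftIter_zero]
    rcases sdot_head_grid r2 h2 with ⟨m, hm⟩ | ⟨m, hm⟩
    · exact ne_topAddr_of_head r2 m hm
    · exact ne_topAddr_of_head r2 _ hm
  rcases sdot_head_grid r1 h1 with ⟨m, ha⟩ | ⟨m, ha⟩ <;>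
    rcases sdot_head_grid r2 h2 with ⟨m', hb⟩ | ⟨m', hb⟩
  · -- both integers
    rcases addrLt_trichotomy (shiftIter r1 1) s with hlt | heq | hgt
    · -- tail < s : itin values are `int (m-1)`, `int (m'-1)`
      have hnb1 : ¬∃ j' : ℤ, shiftIter r1 0 = consAddr ((j' : ℝ) : Entry) s := by
        rintro ⟨j', hj⟩
        rw [shiftIter_zero] at hj
        have : shiftIter r1 1 = s := by rw [hj, shift_cons]
        rw [this] at hlt
        exact addrLt_irrefl s hlt
      have hnb2 : ¬∃ j' : ℤ, shiftIter r2 0 = consAddr ((j' : ℝ) : Entry) s := by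
        rintro ⟨j', hj⟩
        rw [shiftIter_zero] at hj
        have : shiftIter r2 1 = s := by rw [hj, shift_cons]
        rw [hw, this] at hlt
        exact addrLt_irrefl s hlt
      have e1 : itin s r1 0 = ItinEntry.int (m - 1) := by
        apply itin_int s r1 0 (m - 1) hx1 hnb1
        · apply lt_of_head
          rw [consAddr_zero, shiftIter_zero, ha]
          exact_mod_cast WithTop.coe_lt_coe.mpr (by exact_mod_cast (by omega : m - 1 < m))
        · apply lt_of_tail
          · rw [shiftIter_zero, ha, consAddr_zero]
            norm_num
          · rw [shiftIter_zero, shift_cons]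
            exact hlt
      have e2 : itin s r2 0 = ItinEntry.int (m' - 1) := by
        apply itin_int s r2 0 (m' - 1) hx2 hnb2
        · apply lt_of_head
          rw [consAddr_zero, shiftIter_zero, hb]
          exact_mod_cast WithTop.coe_lt_coe.mpr (by exact_mod_cast (by omega : m' - 1 < m'))
        · apply lt_of_tail
          · rw [shiftIter_zero, hb, consAddr_zero]
            norm_num
          · rw [shiftIter_zero, shift_cons, ← hw]
            exact hlt
      rw [e1, e2] at hit
      have : m = m' := by
        injection hit with h
        omega
      rw [ha, hb, this]
    · -- tail = s : both boundary
      have e1 : itin s r1 0 = ItinEntry.bdy m := by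
        apply itin_bdy s r1 0 m hx1
        rw [shiftIter_zero]
        calc r1 = consAddr (r1 0) (shiftIter r1 1) := eq_cons r1
          _ = consAddr ((m : ℝ) : Entry) s := by rw [ha, heq]
      have e2 : itin s r2 0 = ItinEntry.bdy m' := by
        apply itin_bdy s r2 0 m' hx2
        rw [shiftIter_zero]
        calc r2 = consAddr (r2 0) (shiftIter r2 1) := eq_cons r2
          _ = consAddr ((m' : ℝ) : Entry) s := by rw [hb, ← hw, heq]
      rw [e1, e2] at hit
      injection hit with h
      rw [ha, hb, h]
    · -- s < tail : itin values are `int m`, `int m'`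
      have hnb1 : ¬∃ j' : ℤ, shiftIter r1 0 = consAddr ((j' : ℝ) : Entry) s := by
        rintro ⟨j', hj⟩
        rw [shiftIter_zero] at hj
        have : shiftIter r1 1 = s := by rw [hj, shift_cons]
        rw [this] at hgt
        exact addrLt_irrefl s hgt
      have hnb2 : ¬∃ j' : ℤ, shiftIter r2 0 = consAddr ((j' : ℝ) : Entry) s := by
        rintro ⟨j', hj⟩
        rw [shiftIter_zero] at hj
        have : shiftIter r2 1 = s := by rw [hj, shift_cons]
        rw [hw, this] at hgt
        exact addrLt_irrefl s hgt
      have e1 : itin s r1 0 = ItinEntry.int m := by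
        apply itin_int s r1 0 m hx1 hnb1
        · apply lt_of_tail
          · rw [consAddr_zero, shiftIter_zero, ha]
          · rw [shiftIter_zero, shift_cons]
            exact hgt
        · apply lt_of_head
          rw [consAddr_zero, shiftIter_zero, ha]
          exact_mod_cast WithTop.coe_lt_coe.mpr (by exact_mod_cast (by omega : m < m + 1))
      have e2 : itin s r2 0 = ItinEntry.int m' := by
        apply itin_int s r2 0 m' hx2 hnb2
        · apply lt_of_tail
          · rw [consAddr_zero, shiftIter_zero, hb]
          · rw [shiftIter_zero, shift_cons, ← hw]
            exact hgt
        · apply lt_of_head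
          rw [consAddr_zero, shiftIter_zero, hb]
          exact_mod_cast WithTop.coe_lt_coe.mpr (by exact_mod_cast (by omega : m' < m' + 1))
      rw [e1, e2] at hit
      injection hit with h
      rw [ha, hb, h]
  · -- r1 integer head, r2 half-integer head : impossible
    exfalso
    have ht2 : shiftIter r2 1 = topAddr := half_shift_top r2 h2 m' hb
    exact int_shift_ne_top r1 h1 m ha (hw.trans ht2)
  · -- r1 half-integer head, r2 integer head : impossible
    exfalso
    have ht1 : shiftIter r1 1 = topAddr := half_shift_top r1 h1 m ha
    exact int_shift_ne_top r2 h2 m' hb (hw.symm.trans ht1)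
  · -- both half-integers
    have hnb1 : ¬∃ j' : ℤ, shiftIter r1 0 = consAddr ((j' : ℝ) : Entry) s := by
      rintro ⟨j', hj⟩
      rw [shiftIter_zero] at hj
      have h0 := congrFun hj 0
      rw [consAddr_zero, ha] at h0
      exact int_ne_half j' m h0.symm
    have hnb2 : ¬∃ j' : ℤ, shiftIter r2 0 = consAddr ((j' : ℝ) : Entry) s := by
      rintro ⟨j', hj⟩
      rw [shiftIter_zero] at hj
      have h0 := congrFun hj 0
      rw [consAddr_zero, hb] at h0
      exact int_ne_half j' m' h0.symm
    have e1 : itin s r1 0 = ItinEntry.int m := by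
      apply itin_int s r1 0 m hx1 hnb1
      · apply lt_of_head
        rw [consAddr_zero, shiftIter_zero, ha]
        exact WithTop.coe_lt_coe.mpr (by norm_num)
      · apply lt_of_head
        rw [consAddr_zero, shiftIter_zero, ha]
        apply WithTop.coe_lt_coe.mpr
        push_cast
        norm_num
    have e2 : itin s r2 0 = ItinEntry.int m' := by
      apply itin_int s r2 0 m' hx2 hnb2
      · apply lt_of_head
        rw [consAddr_zero, shiftIter_zero, hb]
        exact WithTop.coe_lt_coe.mpr (by norm_num)
      · apply lt_of_head
        rw [consAddr_zero, shiftIter_zero, hb]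
        apply WithTop.coe_lt_coe.mpr
        push_cast
        norm_num
    rw [e1, e2] at hit
    injection hit with h
    rw [ha, hb, h]

lemma intermediate_shift (r : Addr) (n : ℕ) (hn : 2 ≤ n) (hi : IsIntermediate r n) :
    IsIntermediate (shiftIter r 1) (n - 1) := by
  obtain ⟨h1, hint, hhalf, htop⟩ := hi
  refine ⟨by omega, ?_, ?_, ?_⟩
  · intro k hk
    exact hint (k + 1) (by omega)
  · intro k hk
    exact hhalf (k + 1) (by omega)
  · intro k hk
    exact htop (k + 1) (by omega)

lemma intermediate_sbar (r : Addr) (n : ℕ) (hn : 1 ≤ n) (hi : IsIntermediate r n) :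
    InSBar r := by
  rcases Nat.lt_or_ge n 2 with h | h
  · right
    funext k
    exact hi.2.2.2 k (by omega)
  · exact Or.inl (Or.inr ⟨n, h, hi⟩)

lemma shift_sbar (r : Addr) (h : InSDot r) : InSBar (shiftIter r 1) := by
  rcases h with h | ⟨n, hn, hi⟩
  · exact Or.inl (Or.inl (fun k => h (k + 1)))
  · exact intermediate_sbar _ (n - 1) (by omega) (intermediate_shift r n hn hi)

lemma main_lemma (s : Addr) (k : ℕ) :
    ∀ r1 r2 : Addr, InSBar r1 → InSBar r2 → shiftDef r1 k → shiftDef r2 k →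
      shiftIter r1 k = shiftIter r2 k → itin s r1 = itin s r2 → r1 = r2 := by
  induction k with
  | zero =>
    intro r1 r2 _ _ _ _ h _
    rwa [shiftIter_zero, shiftIter_zero] at h
  | succ k ih =>
    intro r1 r2 hb1 hb2 hd1 hd2 hsh hit
    have hne1 : r1 ≠ topAddr := by
      have := hd1 0 (Nat.succ_pos k)
      rwa [shiftIter_zero] at this
    have hne2 : r2 ≠ topAddr := by
      have := hd2 0 (Nat.succ_pos k)
      rwa [shiftIter_zero] at this
    have hs1 : InSDot r1 := hb1.resolve_right hne1
    have hs2 : InSDot r2 := hb2.resolve_right hne2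
    have hw : shiftIter r1 1 = shiftIter r2 1 := by
      apply ih (shiftIter r1 1) (shiftIter r2 1) (shift_sbar r1 hs1) (shift_sbar r2 hs2)
      · intro j hj
        rw [shiftIter_comp]
        exact hd1 (j + 1) (by omega)
      · intro j hj
        rw [shiftIter_comp]
        exact hd2 (j + 1) (by omega)
      · rw [shiftIter_comp, shiftIter_comp]
        exact hsh
      · funext j
        rw [itin_shift, itin_shift]
        exact congrFun hit (j + 1)
    have h0 : r1 0 = r2 0 := head_eq s r1 r2 hs1 hs2 hw (congrFun hit 0)
    funext j
    cases j with
    | zero => exact h0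
    | succ i => exact congrFun hw i

lemma intermediate_shift_top (r : Addr) (n p : ℕ) (hi : IsIntermediate r n) (hp : n ≤ p + 1) :
    shiftIter r p = topAddr := by
  funext j
  exact hi.2.2.2 (j + p) (by omega)

lemma exists_branch (s x : Addr)
    (hgrid : (∃ m : ℤ, x 0 = ((m : ℝ) : Entry)) ∨ (∃ m : ℤ, x 0 = (((m : ℝ) + 1 / 2 : ℝ) : Entry))) :
    (∃ j : ℤ, x = consAddr ((j : ℝ) : Entry) s) ∨
      ∃ j : ℤ, addrLt (consAddr ((j : ℝ) : Entry) s) x ∧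
        addrLt x (consAddr (((j + 1 : ℤ) : ℝ) : Entry) s) := by
  rcases hgrid with ⟨m, hm⟩ | ⟨m, hm⟩
  · rcases addrLt_trichotomy (shiftIter x 1) s with hlt | heq | hgt
    · right
      refine ⟨m - 1, ?_, ?_⟩
      · apply lt_of_head
        rw [consAddr_zero, hm]
        exact_mod_cast WithTop.coe_lt_coe.mpr (by exact_mod_cast (by omega : m - 1 < m))
      · apply lt_of_tail
        · rw [hm, consAddr_zero]
          norm_num
        · rw [shift_cons]
          exact hlt
    · left
      refine ⟨m, ?_⟩
      calc x = consAddr (x 0) (shiftIter x 1) := eq_cons x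
        _ = consAddr ((m : ℝ) : Entry) s := by rw [hm, heq]
    · right
      refine ⟨m, ?_, ?_⟩
      · apply lt_of_tail
        · rw [consAddr_zero, hm]
        · rw [shift_cons]
          exact hgt
      · apply lt_of_head
        rw [consAddr_zero, hm]
        exact_mod_cast WithTop.coe_lt_coe.mpr (by exact_mod_cast (by omega : m < m + 1))
  · right
    refine ⟨m, ?_, ?_⟩
    · apply lt_of_head
      rw [consAddr_zero, hm]
      exact WithTop.coe_lt_coe.mpr (by norm_num)
    · apply lt_of_head
      rw [consAddr_zero, hm]
      apply WithTop.coe_lt_coe.mpr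
      push_cast
      norm_num

lemma itin_ne_star (s r : Addr) (p : ℕ) (hx : shiftIter r p ≠ topAddr)
    (hbr : (∃ j : ℤ, shiftIter r p = consAddr ((j : ℝ) : Entry) s) ∨
      ∃ j : ℤ, addrLt (consAddr ((j : ℝ) : Entry) s) (shiftIter r p) ∧
        addrLt (shiftIter r p) (consAddr (((j + 1 : ℤ) : ℝ) : Entry) s)) :
    itin s r p ≠ ItinEntry.star := by
  unfold itin
  rw [if_neg hx]
  by_cases h1 : ∃ j : ℤ, shiftIter r p = consAddr ((j : ℝ) : Entry) s
  · rw [dif_pos h1]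
    exact fun h => ItinEntry.noConfusion h
  · rw [dif_neg h1, dif_pos (hbr.resolve_left h1)]
    exact fun h => ItinEntry.noConfusion h

lemma intermediate_itin_ne_star (s r : Addr) (n p : ℕ) (hi : IsIntermediate r n)
    (hp : p + 2 ≤ n) : itin s r p ≠ ItinEntry.star := by
  obtain ⟨h1, hint, hhalf, htop⟩ := hi
  have hgrid : (∃ m : ℤ, r p = ((m : ℝ) : Entry)) ∨
      (∃ m : ℤ, r p = (((m : ℝ) + 1 / 2 : ℝ) : Entry)) := by
    rcases Nat.lt_or_ge (p + 2) n with hc | hc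
    · exact Or.inl (hint p hc)
    · exact Or.inr (hhalf p (by omega))
  have hx : shiftIter r p ≠ topAddr := by
    intro h
    have h0 := congrFun h 0
    rw [shiftIter_app_zero] at h0
    rcases hgrid with ⟨m, hm⟩ | ⟨m, hm⟩ <;> rw [hm] at h0 <;> exact WithTop.coe_ne_top h0
  apply itin_ne_star s r p hx
  apply exists_branch
  rw [shiftIter_app_zero]
  exact hgrid

lemma intermediate_len_eq (s r1 r2 : Addr) (n1 n2 : ℕ)
    (hi1 : IsIntermediate r1 n1) (hi2 : IsIntermediate r2 n2)
    (hit : itin s r1 = itin s r2) : n1 = n2 := by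
  by_contra hne
  rcases Nat.lt_or_ge n1 n2 with h | h
  · have hstar : itin s r1 (n1 - 1) = ItinEntry.star :=
      itin_star s r1 (n1 - 1) (intermediate_shift_top r1 n1 (n1 - 1) hi1 (by omega))
    have hne' : itin s r2 (n1 - 1) ≠ ItinEntry.star :=
      intermediate_itin_ne_star s r2 n2 (n1 - 1) hi2 (by have := hi1.1; omega)
    rw [hit] at hstar
    exact hne' hstar
  · have h' : n2 < n1 := by omega
    have hstar : itin s r2 (n2 - 1) = ItinEntry.star :=
      itin_star s r2 (n2 - 1) (intermediate_shift_top r2 n2 (n2 - 1) hi2 (by omega))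
    have hne' : itin s r1 (n2 - 1) ≠ ItinEntry.star :=
      intermediate_itin_ne_star s r1 n1 (n2 - 1) hi1 (by have := hi2.1; omega)
    rw [← hit] at hstar
    exact hne' hstar

lemma intermediate_shiftDef (r : Addr) (n : ℕ) (hi : IsIntermediate r n) :
    shiftDef r (n - 1) := by
  intro j hj
  obtain ⟨h1, hint, hhalf, htop⟩ := hi
  have hgrid : (∃ m : ℤ, r j = ((m : ℝ) : Entry)) ∨
      (∃ m : ℤ, r j = (((m : ℝ) + 1 / 2 : ℝ) : Entry)) := by
    rcases Nat.lt_or_ge (j + 2) n with hc | hc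
    · exact Or.inl (hint j hc)
    · exact Or.inr (hhalf j (by omega))
  intro h
  have h0 := congrFun h 0
  rw [shiftIter_app_zero] at h0
  rcases hgrid with ⟨m, hm⟩ | ⟨m, hm⟩ <;> rw [hm] at h0 <;> exact WithTop.coe_ne_top h0

end Helpers

/-- Let `s ∈ Ṡ`, `t ∈ S̄` and `k ≥ 0`. No two elements of `σ^{-k}(t)`
have the same itinerary with respect to `s`; in particular, no two distinct intermediate
external addresses have the same itinerary with respect to `s`. -/
theorem stmt5 (s : Addr) (hs : InSDot s) (t : Addr) (ht : InSBar t) (k : ℕ) :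
    (∀ r1 r2 : Addr, InSBar r1 → InSBar r2 → shiftDef r1 k → shiftDef r2 k →
      shiftIter r1 k = t → shiftIter r2 k = t → itin s r1 = itin s r2 → r1 = r2) ∧
    (∀ r1 r2 : Addr, (∃ n, 1 ≤ n ∧ IsIntermediate r1 n) → (∃ n, 1 ≤ n ∧ IsIntermediate r2 n) →
      itin s r1 = itin s r2 → r1 = r2) := by
  constructor
  · intro r1 r2 hb1 hb2 hd1 hd2 h1 h2 hit
    exact main_lemma s k r1 r2 hb1 hb2 hd1 hd2 (h1.trans h2.symm) hit
  · rintro r1 r2 ⟨n1, hn1, hi1⟩ ⟨n2, hn2, hi2⟩ hit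
    have hlen : n1 = n2 := intermediate_len_eq s r1 r2 n1 n2 hi1 hi2 hit
    subst hlen
    apply main_lemma s (n1 - 1) r1 r2
      (intermediate_sbar r1 n1 hn1 hi1) (intermediate_sbar r2 n1 hn2 hi2)
      (intermediate_shiftDef r1 n1 hi1) (intermediate_shiftDef r2 n1 hi2) ?_ hit
    rw [intermediate_shift_top r1 n1 (n1 - 1) hi1 (by omega),
      intermediate_shift_top r2 n1 (n1 - 1) hi2 (by omega)]

end
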